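/- There is a constant c > 0 such that for every locally integrable f on ℝⁿ and every cube Q, (1/|Q|) ∫_Q Mf(y) dy ≤ c sup_{Q' ⊇ Q} ‖f‖_{L(1+log⁺L),Q'}, where the supremum is over all cubes Q' containing Q. -/

import Mathlib

open MeasureTheory ENNReal Set

noncomputable section

/-- `ℝⁿ` with the Euclidean metric. -/
abbrev Rn (n : ℕ) : Type := EuclideanSpace ℝ (Fin n)

/-- The axis-parallel cube with center `c` and side length `h`. -/
def zCube {n : ℕ} (c : Rn n) (h : ℝ) : Set (Rn n) := {x | ∀ i, |x i - c i| ≤ h / 2}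

/-- `log⁺ t = max (log t) 0`. -/
def logPlus (t : ℝ) : ℝ := max (Real.log t) 0

/-- The Hardy–Littlewood maximal operator of an `ℝ≥0∞`-valued function:
`sup_{Q ∋ x} |Q|⁻¹ ∫_Q g`, the supremum over all axis-parallel cubes containing `x`. -/
def maxE {n : ℕ} (g : Rn n → ℝ≥0∞) (x : Rn n) : ℝ≥0∞ :=
  ⨆ (c : Rn n) (h : ℝ) (_ : 0 < h) (_ : x ∈ zCube c h),
    (ENNReal.ofReal (h ^ n))⁻¹ * ∫⁻ y in zCube c h, g y

/-- The Hardy–Littlewood maximal operator of a real function. -/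
def HLM {n : ℕ} (f : Rn n → ℝ) (x : Rn n) : ℝ≥0∞ :=
  maxE (fun y => ENNReal.ofReal |f y|) x

/-- The fractional maximal operator `M_α` applied to an `ℝ≥0∞`-valued function:
`sup_{Q ∋ x} |Q|^{(α-n)/n} ∫_Q g`. -/
def fracMaxE {n : ℕ} (α : ℝ) (g : Rn n → ℝ≥0∞) (x : Rn n) : ℝ≥0∞ :=
  ⨆ (c : Rn n) (h : ℝ) (_ : 0 < h) (_ : x ∈ zCube c h),
    ENNReal.ofReal (h ^ (α - (n : ℝ))) * ∫⁻ y in zCube c h, g y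

/-- The maximal commutator `C_b(f)(x) = sup_{Q ∋ x} |Q|⁻¹ ∫_Q |b x - b y| |f y| dy`. -/
def maxComm {n : ℕ} (b f : Rn n → ℝ) (x : Rn n) : ℝ≥0∞ :=
  ⨆ (c : Rn n) (h : ℝ) (_ : 0 < h) (_ : x ∈ zCube c h),
    (ENNReal.ofReal (h ^ n))⁻¹ * ∫⁻ y in zCube c h, ENNReal.ofReal (|b x - b y| * |f y|)

/-- The mean value `f_Q = |Q|⁻¹ ∫_Q f` of `f` over the cube with center `c`, side `h`. -/
def cubeMean {n : ℕ} (f : Rn n → ℝ) (c : Rn n) (h : ℝ) : ℝ :=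
  (h ^ n)⁻¹ * ∫ y in zCube c h, f y

/-- The mean oscillation `|Q|⁻¹ ∫_Q |b - b_Q|` of `b` over a cube. -/
def oscAvg {n : ℕ} (b : Rn n → ℝ) (c : Rn n) (h : ℝ) : ℝ≥0∞ :=
  (ENNReal.ofReal (h ^ n))⁻¹ * ∫⁻ y in zCube c h, ENNReal.ofReal |b y - cubeMean b c h|

/-- The BMO seminorm `‖b‖_* = sup_Q |Q|⁻¹ ∫_Q |b - b_Q|`. -/
def bmoNorm {n : ℕ} (b : Rn n → ℝ) : ℝ≥0∞ :=
  ⨆ (c : Rn n) (h : ℝ) (_ : 0 < h), oscAvg b c h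

/-- Morrey norm `‖g‖_{M_{p,λ}} = sup_{x, r>0} r^{(λ-n)/p} (∫_{B(x,r)} g^p)^{1/p}`
for an `ℝ≥0∞`-valued function. -/
def morreyE {n : ℕ} (p lam : ℝ) (g : Rn n → ℝ≥0∞) : ℝ≥0∞ :=
  ⨆ (x : Rn n) (r : ℝ) (_ : 0 < r),
    ENNReal.ofReal (r ^ ((lam - n) / p)) * (∫⁻ y in Metric.ball x r, g y ^ p) ^ (1 / p)

/-- Morrey norm of a real function. -/
def morrey {n : ℕ} (p lam : ℝ) (f : Rn n → ℝ) : ℝ≥0∞ :=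
  morreyE p lam (fun y => ENNReal.ofReal |f y|)

/-- The Zygmund function `Φ(t) = t (1 + log⁺ t)`, extended to `ℝ≥0∞`. -/
def zygFnE (t : ℝ≥0∞) : ℝ≥0∞ := t * (1 + ENNReal.ofReal (logPlus t.toReal))

/-- The Luxemburg-type `L(1+log⁺L)`-average of `g` over a cube:
`inf {α > 0 : |Q|⁻¹ ∫_Q Φ(g/α) ≤ 1}` (as an element of `ℝ≥0∞`, `= ∞` if no such `α`). -/
def zygAvgE {n : ℕ} (g : Rn n → ℝ≥0∞) (c : Rn n) (h : ℝ) : ℝ≥0∞ :=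
  sInf {a : ℝ≥0∞ | ∃ α : ℝ, 0 < α ∧ a = ENNReal.ofReal α ∧
    (ENNReal.ofReal (h ^ n))⁻¹ * ∫⁻ y in zCube c h, zygFnE (g y / ENNReal.ofReal α) ≤ 1}

/-- The `L(1+log⁺L)`-average of a real function over a cube. -/
def zygAvg {n : ℕ} (f : Rn n → ℝ) (c : Rn n) (h : ℝ) : ℝ≥0∞ :=
  zygAvgE (fun y => ENNReal.ofReal |f y|) c h

/-- The weak `L(1+log⁺L)`-average of `g` over a cube:
`inf {α > 0 : ∀ t > 0, |Q|⁻¹ |{x ∈ Q : g x > α t}| ≤ (1/t)(1 + log⁺(1/t))}`. -/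
def weakZygAvgE {n : ℕ} (g : Rn n → ℝ≥0∞) (c : Rn n) (h : ℝ) : ℝ≥0∞ :=
  sInf {a : ℝ≥0∞ | ∃ α : ℝ, 0 < α ∧ a = ENNReal.ofReal α ∧ ∀ t : ℝ, 0 < t →
    (ENNReal.ofReal (h ^ n))⁻¹ * volume {x ∈ zCube c h | ENNReal.ofReal (α * t) < g x}
      ≤ ENNReal.ofReal ((1 / t) * (1 + logPlus (1 / t)))}

/-- The Zygmund–Morrey norm `sup_Q |Q|^{λ/n} ‖g‖_{L(1+log⁺L),Q}` of an `ℝ≥0∞`-valued function. -/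
def zygMorreyE {n : ℕ} (lam : ℝ) (g : Rn n → ℝ≥0∞) : ℝ≥0∞ :=
  ⨆ (c : Rn n) (h : ℝ) (_ : 0 < h), ENNReal.ofReal (h ^ lam) * zygAvgE g c h

/-- The Zygmund–Morrey norm of a real function. -/
def zygMorrey {n : ℕ} (lam : ℝ) (f : Rn n → ℝ) : ℝ≥0∞ :=
  zygMorreyE lam (fun y => ENNReal.ofReal |f y|)

/-- The weak Zygmund–Morrey norm `sup_Q |Q|^{λ/n} ‖g‖_{WL(1+log⁺L),Q}`. -/
def weakZygMorreyE {n : ℕ} (lam : ℝ) (g : Rn n → ℝ≥0∞) : ℝ≥0∞ :=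
  ⨆ (c : Rn n) (h : ℝ) (_ : 0 < h), ENNReal.ofReal (h ^ lam) * weakZygAvgE g c h

/-- The commutator `[M,b]f(x) = M(bf)(x) - b(x) Mf(x)`. -/
def commMb {n : ℕ} (b f : Rn n → ℝ) (x : Rn n) : ℝ :=
  (HLM (fun y => b y * f y) x).toReal - b x * (HLM f x).toReal

/-- `f` is radially decreasing: `f x = φ ‖x‖` with `φ` nonnegative and
nonincreasing on `(0,∞)`, measurable. -/
def RadDec {n : ℕ} (f : Rn n → ℝ) : Prop :=
  ∃ φ : ℝ → ℝ, Measurable φ ∧ (∀ r : ℝ, 0 < r → 0 ≤ φ r) ∧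
    AntitoneOn φ (Set.Ioi 0) ∧ ∀ x, f x = φ ‖x‖

/-- `∫_Q |f| (1 + log⁺(|f| / |f|_Q))`. -/
def zygInt {n : ℕ} (f : Rn n → ℝ) (c : Rn n) (h : ℝ) : ℝ≥0∞ :=
  ∫⁻ y in zCube c h,
    ENNReal.ofReal (|f y| * (1 + logPlus (|f y| / cubeMean (fun z => |f z|) c h)))

/-- `∫_0^t φ(ρ) ρ^{n-1} dρ`. -/
def radInt1 (n : ℕ) (φ : ℝ → ℝ) (t : ℝ) : ℝ≥0∞ :=
  ∫⁻ ρ in Set.Ioc (0 : ℝ) t, ENNReal.ofReal (φ ρ * ρ ^ (n - 1))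

/-- `∫_0^x (1/t) ∫_0^t φ(ρ) ρ^{n-1} dρ dt`. -/
def radInt2 (n : ℕ) (φ : ℝ → ℝ) (x : ℝ) : ℝ≥0∞ :=
  ∫⁻ t in Set.Ioc (0 : ℝ) x, (ENNReal.ofReal t)⁻¹ * radInt1 n φ t

/-- `∫_0^x (1/y) ∫_0^y (1/t) ∫_0^t φ(ρ) ρ^{n-1} dρ dt dy`. -/
def radInt3 (n : ℕ) (φ : ℝ → ℝ) (x : ℝ) : ℝ≥0∞ :=
  ∫⁻ y in Set.Ioc (0 : ℝ) x, (ENNReal.ofReal y)⁻¹ * radInt2 n φ y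

/-- `sup_{x>0} x^{λ-n} ∫_0^x (1/t) ∫_0^t φ(ρ) ρ^{n-1} dρ dt`. -/
def radSup2 (n : ℕ) (lam : ℝ) (φ : ℝ → ℝ) : ℝ≥0∞ :=
  ⨆ (x : ℝ) (_ : 0 < x), ENNReal.ofReal (x ^ (lam - (n : ℝ))) * radInt2 n φ x

/-- `sup_{x>0} x^{λ-n} ∫_0^x (1/y) ∫_0^y (1/t) ∫_0^t φ(ρ) ρ^{n-1} dρ dt dy`. -/
def radSup3 (n : ℕ) (lam : ℝ) (φ : ℝ → ℝ) : ℝ≥0∞ :=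
  ⨆ (x : ℝ) (_ : 0 < x), ENNReal.ofReal (x ^ (lam - (n : ℝ))) * radInt3 n φ x

/-! Write `Q = zCube ctr h`. A cube through a point of `Q` is either small, and then lies in
`3Q`, so that only `g = |f| · 1_{3Q}` matters, or large, and then sits inside a cube of
comparable size centred at `ctr` and containing `Q`, whose plain average is at most its
`L log L` average. The small cubes are handled by Stein's estimate
`∫_Q M g ≤ 2α |Q| + C α ∫ Φ(g / α)`, obtained from the layer-cake formula and the weak type
(1,1) bound `|{M g > t}| ≤ (C / t) ∫_{g > t/2} g` (Vitali covering) integrated over `t > 2α`;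
for `α` admissible in the `L log L` average over `3Q`, `∫ Φ(g / α) ≤ |3Q|`.
To integrate `M g` it is replaced by its measurable version over rational cubes, at the cost
of a factor `2ⁿ`. -/

section

variable {n : ℕ}

theorem isClosed_zCube (c : Rn n) (h : ℝ) : IsClosed (zCube c h) := by
  simp only [zCube, Set.ofPred_forall]
  exact isClosed_iInter fun i => isClosed_le (by fun_prop) continuous_const

theorem measurableSet_zCube (c : Rn n) (h : ℝ) : MeasurableSet (zCube c h) :=
  (isClosed_zCube c h).measurableSet

theorem volume_zCube (c : Rn n) {h : ℝ} (hh : 0 ≤ h) :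
    volume (zCube c h) = ENNReal.ofReal (h ^ n) := by
  have hpre : zCube c h = (MeasurableEquiv.toLp 2 (Fin n → ℝ)).symm ⁻¹'
      Set.univ.pi fun i => Icc (c i - h / 2) (c i + h / 2) := by
    ext x
    have hx : ∀ i, (MeasurableEquiv.toLp 2 (Fin n → ℝ)).symm x i = x i := fun _ => rfl
    simp only [zCube, mem_preimage, Set.mem_univ_pi, mem_Icc, abs_le, hx]
    exact forall_congr' fun i => by constructor <;> rintro ⟨_, _⟩ <;> constructor <;> linarith
  rw [hpre, (EuclideanSpace.volume_preserving_symm_measurableEquiv_toLp (Fin n)).measure_preimage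
    (MeasurableSet.univ_pi fun i => measurableSet_Icc).nullMeasurableSet, volume_pi_pi]
  simp [Real.volume_Icc, ENNReal.ofReal_pow hh]

theorem zCube_subset_zCube {c c' : Rn n} {s s' : ℝ} (h : ∀ i, |c i - c' i| + s / 2 ≤ s' / 2) :
    zCube c s ⊆ zCube c' s' := fun z hz i => by
  linarith [abs_sub_le (z i) (c i) (c' i), hz i, h i]

theorem zCube_mono (c : Rn n) {s s' : ℝ} (h : s ≤ s') : zCube c s ⊆ zCube c s' :=
  zCube_subset_zCube fun i => by simp only [sub_self, abs_zero]; linarith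

theorem zCube_subset_of_mem {x c c' : Rn n} {s s' : ℝ} (hx : x ∈ zCube c s)
    (hx' : x ∈ zCube c' s') : zCube c s ⊆ zCube c' (2 * s + s') :=
  zCube_subset_zCube fun i => by
    linarith [abs_sub_le (c i) (x i) (c' i), abs_sub_comm (c i) (x i), hx i, hx' i]

theorem zCube_subset_closedBall (c : Rn n) {h : ℝ} (hh : 0 ≤ h) :
    zCube c h ⊆ Metric.closedBall c (√n * h / 2) := by
  intro x hx
  rw [Metric.mem_closedBall, EuclideanSpace.dist_eq]
  calc √(∑ i, dist (x i) (c i) ^ 2) ≤ √(∑ _i : Fin n, (h / 2) ^ 2) := by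
        gcongr with i
        rw [Real.dist_eq]
        exact hx i
    _ = √n * h / 2 := by
        rw [Finset.sum_const, Finset.card_univ, Fintype.card_fin, nsmul_eq_mul,
          Real.sqrt_mul (Nat.cast_nonneg n), Real.sqrt_sq (by linarith)]
        ring

theorem closedBall_subset_zCube (c : Rn n) (r : ℝ) :
    Metric.closedBall c r ⊆ zCube c (2 * r) := fun x hx i => by
  have := (PiLp.norm_apply_le (x - c) i).trans (mem_closedBall_iff_norm.mp hx)
  simp only [PiLp.sub_apply, Real.norm_eq_abs] at this
  linarith

def cubeAvg (g : Rn n → ℝ≥0∞) (c : Rn n) (h : ℝ) : ℝ≥0∞ :=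
  (ENNReal.ofReal (h ^ n))⁻¹ * ∫⁻ y in zCube c h, g y

theorem cubeAvg_le_maxE {g : Rn n → ℝ≥0∞} {c x : Rn n} {h : ℝ} (hh : 0 < h)
    (hx : x ∈ zCube c h) : cubeAvg g c h ≤ maxE g x :=
  le_iSup₂_of_le c h <| le_iSup₂_of_le hh hx le_rfl

theorem maxE_le {g : Rn n → ℝ≥0∞} {x : Rn n} {a : ℝ≥0∞}
    (H : ∀ c h, 0 < h → x ∈ zCube c h → cubeAvg g c h ≤ a) : maxE g x ≤ a :=
  iSup₂_le fun c h => iSup₂_le fun hh hx => H c h hh hx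

theorem maxE_congr_ae {g g' : Rn n → ℝ≥0∞} (hg : g =ᵐ[volume] g') : maxE g = maxE g' := by
  funext x
  simp only [maxE, fun s => lintegral_congr_ae (ae_restrict_of_ae (s := s) hg)]

theorem zygAvgE_congr_ae {g g' : Rn n → ℝ≥0∞} (hg : g =ᵐ[volume] g') (c : Rn n) (h : ℝ) :
    zygAvgE g c h = zygAvgE g' c h := by
  have hint : ∀ α : ℝ, ∫⁻ y in zCube c h, zygFnE (g y / ENNReal.ofReal α) =
      ∫⁻ y in zCube c h, zygFnE (g' y / ENNReal.ofReal α) := fun α =>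
    lintegral_congr_ae <| ae_restrict_of_ae <| hg.mono fun y hy => by simp only [hy]
  simp only [zygAvgE, hint]

theorem cubeAvg_le_pow_mul_cubeAvg (g : Rn n → ℝ≥0∞) {c c' : Rn n} {s s' k : ℝ}
    (hs : 0 < s) (hs' : 0 < s') (hk : s' ≤ k * s) (hsub : zCube c s ⊆ zCube c' s') :
    cubeAvg g c s ≤ ENNReal.ofReal (k ^ n) * cubeAvg g c' s' := by
  have hvol : (ENNReal.ofReal (s ^ n))⁻¹ ≤
      ENNReal.ofReal (k ^ n) * (ENNReal.ofReal (s' ^ n))⁻¹ := by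
    have hk0 : 0 < k := pos_of_mul_pos_left (hs'.trans_le hk) hs.le
    rw [← ENNReal.ofReal_inv_of_pos (by positivity), ← ENNReal.ofReal_inv_of_pos (by positivity),
      ← ENNReal.ofReal_mul (by positivity), ← div_eq_mul_inv]
    refine ENNReal.ofReal_le_ofReal ?_
    rw [le_div_iff₀ (by positivity), inv_mul_le_iff₀ (by positivity), ← mul_pow, mul_comm s]
    gcongr
  calc cubeAvg g c s ≤ ENNReal.ofReal (k ^ n) * (ENNReal.ofReal (s' ^ n))⁻¹ *
        ∫⁻ y in zCube c' s', g y := mul_le_mul' hvol (lintegral_mono_set hsub)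
    _ = _ := by rw [cubeAvg, mul_assoc]

theorem cubeAvg_le_zygAvgE (g : Rn n → ℝ≥0∞) (c : Rn n) (h : ℝ) :
    cubeAvg g c h ≤ zygAvgE g c h := by
  refine le_sInf ?_
  rintro _ ⟨α, hα, rfl, hΦ⟩
  have hα0 : ENNReal.ofReal α ≠ 0 := (ENNReal.ofReal_pos.mpr hα).ne'
  have hdiv : cubeAvg g c h / ENNReal.ofReal α =
      cubeAvg (fun y => g y / ENNReal.ofReal α) c h := by
    simp only [cubeAvg, div_eq_mul_inv, mul_assoc,
      lintegral_mul_const' _ _ (ENNReal.inv_ne_top.mpr hα0)]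
  rw [← one_mul (ENNReal.ofReal α), ← ENNReal.div_le_iff hα0 ENNReal.ofReal_ne_top, hdiv]
  refine le_trans (mul_le_mul_right (lintegral_mono fun y => ?_) _) hΦ
  exact le_mul_of_one_le_right zero_le (le_add_right le_rfl)

def ratCenter (a : Fin n → ℚ) : Rn n := WithLp.toLp 2 fun i => (a i : ℝ)

-- Only countably many cubes enter, which makes `ratMaxE g` measurable, unlike `maxE g`.
def ratMaxE (g : Rn n → ℝ≥0∞) (x : Rn n) : ℝ≥0∞ :=
  ⨆ (p : (Fin n → ℚ) × ℚ) (_ : 0 < p.2) (_ : x ∈ zCube (ratCenter p.1) p.2),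
    cubeAvg g (ratCenter p.1) p.2

theorem measurable_ratMaxE (g : Rn n → ℝ≥0∞) : Measurable (ratMaxE g) := by
  refine Measurable.iSup fun _ => Measurable.iSup_Prop _ ?_
  classical
  simp only [iSup_eq_if]
  exact Measurable.ite (measurableSet_zCube _ _) measurable_const measurable_const

theorem cubeAvg_le_ratMaxE {g : Rn n → ℝ≥0∞} {x : Rn n} {p : (Fin n → ℚ) × ℚ} (hp : 0 < p.2)
    (hx : x ∈ zCube (ratCenter p.1) p.2) : cubeAvg g (ratCenter p.1) p.2 ≤ ratMaxE g x :=
  le_iSup_of_le p <| le_iSup₂_of_le hp hx le_rfl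

theorem ratMaxE_le_maxE (g : Rn n → ℝ≥0∞) (x : Rn n) : ratMaxE g x ≤ maxE g x :=
  iSup_le fun _ => iSup₂_le fun hp hx => cubeAvg_le_maxE (Rat.cast_pos.mpr hp) hx

theorem exists_ratCenter_zCube_superset (c : Rn n) {s : ℝ} (hs : 0 < s) :
    ∃ p : (Fin n → ℚ) × ℚ, 0 < p.2 ∧ (p.2 : ℝ) ≤ 2 * s ∧
      zCube c s ⊆ zCube (ratCenter p.1) p.2 := by
  obtain ⟨q, hsq, hq2s⟩ := exists_rat_btwn (by linarith : s < 2 * s)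
  have hcenter (i : Fin n) : ∃ a : ℚ, |c i - a| < ((q : ℝ) - s) / 2 := by
    obtain ⟨a, ha₁, ha₂⟩ := exists_rat_btwn
      (by linarith : c i - ((q : ℝ) - s) / 2 < c i + ((q : ℝ) - s) / 2)
    exact ⟨a, abs_sub_lt_iff.mpr ⟨by linarith, by linarith⟩⟩
  choose a ha using hcenter
  refine ⟨(a, q), by exact_mod_cast hs.trans hsq, hq2s.le, zCube_subset_zCube fun i => ?_⟩
  exact (by linarith [ha i] : |c i - a i| + s / 2 ≤ q / 2)

theorem maxE_le_ratMaxE (g : Rn n → ℝ≥0∞) (x : Rn n) :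
    maxE g x ≤ ENNReal.ofReal (2 ^ n) * ratMaxE g x := by
  refine maxE_le fun c s hs hx => ?_
  obtain ⟨p, hp, hp2, hsub⟩ := exists_ratCenter_zCube_superset c hs
  calc cubeAvg g c s ≤ ENNReal.ofReal (2 ^ n) * cubeAvg g (ratCenter p.1) p.2 :=
        cubeAvg_le_pow_mul_cubeAvg g hs (Rat.cast_pos.mpr hp) hp2 hsub
    _ ≤ ENNReal.ofReal (2 ^ n) * ratMaxE g x :=
        mul_le_mul_right (cubeAvg_le_ratMaxE hp (hsub hx)) _

theorem volume_zCube_mul (c : Rn n) {k s : ℝ} (hk : 0 ≤ k) (hs : 0 ≤ s) :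
    volume (zCube c (k * s)) = ENNReal.ofReal (k ^ n) * volume (zCube c s) := by
  rw [volume_zCube c (mul_nonneg hk hs), volume_zCube c hs, mul_pow,
    ENNReal.ofReal_mul (by positivity)]

theorem volume_zCube_le_of_lt_cubeAvg {g : Rn n → ℝ≥0∞} {c : Rn n} {s t : ℝ} (hs : 0 < s)
    (ht : 0 < t) (hlt : ENNReal.ofReal t < cubeAvg g c s) :
    volume (zCube c s) ≤ (ENNReal.ofReal t)⁻¹ * ∫⁻ y in zCube c s, g y := by
  have hV₀ : ENNReal.ofReal (s ^ n) ≠ 0 := (ENNReal.ofReal_pos.mpr (by positivity)).ne'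
  rw [volume_zCube c hs.le, ← ENNReal.mul_le_iff_le_inv (ENNReal.ofReal_pos.mpr ht).ne'
    ENNReal.ofReal_ne_top]
  calc ENNReal.ofReal t * ENNReal.ofReal (s ^ n) ≤ cubeAvg g c s * ENNReal.ofReal (s ^ n) :=
        mul_le_mul_left hlt.le _
    _ = ∫⁻ y in zCube c s, g y := by
        rw [cubeAvg, mul_comm, ← mul_assoc, ENNReal.mul_inv_cancel hV₀ ENNReal.ofReal_ne_top,
          one_mul]

theorem volume_iUnion_zCube_le (hn : 0 < n) {ι : Type*} (c : ι → Rn n) (s : ι → ℝ)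
    (hs : ∀ i, 0 < s i) (hbdd : BddAbove (range s)) (ν : Measure (Rn n))
    (hν : ∀ i, volume (zCube (c i) (s i)) ≤ ν (zCube (c i) (s i))) :
    volume (⋃ i, zCube (c i) (s i)) ≤ ENNReal.ofReal ((4 * √n) ^ n) * ν univ := by
  obtain ⟨B, hB⟩ := hbdd
  set r : ι → ℝ := fun i => √n * s i / 2
  have hr (i : ι) : 0 < r i := by have := hs i; positivity
  obtain ⟨u, -, hdisj, hcover⟩ :=
    Vitali.exists_disjoint_subfamily_covering_enlargement_closedBall univ c r (√n * B / 2)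
      (fun i _ => show √(n : ℝ) * s i / 2 ≤ _ by gcongr; exact hB ⟨i, rfl⟩) 4 (by norm_num)
  have hu : u.Countable := hdisj.countable_of_nonempty_interior fun i _ =>
    ⟨c i, mem_interior_iff_mem_nhds.mpr (Metric.closedBall_mem_nhds _ (hr i))⟩
  have hcubes : u.PairwiseDisjoint fun i => zCube (c i) (s i) :=
    hdisj.mono fun i => zCube_subset_closedBall _ (hs i).le
  have hsub : (⋃ i, zCube (c i) (s i)) ⊆ ⋃ i ∈ u, Metric.closedBall (c i) (4 * r i) := by
    refine iUnion_subset fun i => (zCube_subset_closedBall _ (hs i).le).trans ?_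
    obtain ⟨b, hb, hib⟩ := hcover i (mem_univ _)
    exact hib.trans (subset_biUnion_of_mem (u := fun b => Metric.closedBall (c b) (4 * r b)) hb)
  have hball (i : ι) : volume (Metric.closedBall (c i) (4 * r i)) ≤
      ENNReal.ofReal ((4 * √n) ^ n) * ν (zCube (c i) (s i)) := by
    calc volume (Metric.closedBall (c i) (4 * r i))
        ≤ volume (zCube (c i) ((4 * √n) * s i)) := by
          refine measure_mono ((closedBall_subset_zCube _ _).trans (zCube_mono _ (le_of_eq ?_)))
          ring
      _ ≤ _ := by
          rw [volume_zCube_mul _ (by positivity) (hs i).le]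
          exact mul_le_mul_right (hν i) _
  calc volume (⋃ i, zCube (c i) (s i))
      ≤ ∑' i : u, volume (Metric.closedBall (c i) (4 * r i)) :=
        (measure_mono hsub).trans (measure_biUnion_le _ hu _)
    _ ≤ ∑' i : u, ENNReal.ofReal ((4 * √n) ^ n) * ν (zCube (c i) (s i)) :=
        ENNReal.tsum_le_tsum fun i => hball i
    _ = ENNReal.ofReal ((4 * √n) ^ n) * ν (⋃ i ∈ u, zCube (c i) (s i)) := by
        rw [ENNReal.tsum_mul_left, measure_biUnion hu hcubes fun i _ => measurableSet_zCube _ _]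
    _ ≤ ENNReal.ofReal ((4 * √n) ^ n) * ν univ :=
        mul_le_mul_right (measure_mono (subset_univ _)) _

theorem volume_lt_maxE_le (hn : 0 < n) (g : Rn n → ℝ≥0∞) {t : ℝ} (ht : 0 < t) :
    volume {y | ENNReal.ofReal t < maxE g y} ≤
      ENNReal.ofReal ((4 * √n) ^ n) * (ENNReal.ofReal t)⁻¹ * ∫⁻ y, g y := by
  rcases eq_or_ne (∫⁻ y, g y) ∞ with hI | hI
  · rw [hI, ENNReal.mul_top (mul_ne_zero (ENNReal.ofReal_pos.mpr (by positivity)).ne'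
      (ENNReal.inv_ne_zero.mpr ENNReal.ofReal_ne_top))]
    exact le_top
  set E := {y | ENNReal.ofReal t < maxE g y}
  have hcube (y : E) :
      ∃ c s, 0 < s ∧ (y : Rn n) ∈ zCube c s ∧ ENNReal.ofReal t < cubeAvg g c s := by
    have hyE := y.2
    simp only [E, mem_ofPred_eq, maxE, lt_iSup_iff, exists_prop] at hyE
    exact hyE
  choose c s hs hy hlt using hcube
  have hvol (y : E) := volume_zCube_le_of_lt_cubeAvg (hs y) ht (hlt y)
  have hbdd : BddAbove (range s) := by
    refine ⟨max 1 ((ENNReal.ofReal t)⁻¹ * ∫⁻ y, g y).toReal, ?_⟩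
    rintro _ ⟨y, rfl⟩
    have hpow : s y ^ n ≤ ((ENNReal.ofReal t)⁻¹ * ∫⁻ y, g y).toReal := by
      rw [← ENNReal.ofReal_le_iff_le_toReal (ENNReal.mul_ne_top (by simpa using ht) hI),
        ← volume_zCube (c y) (hs y).le]
      exact (hvol y).trans (mul_le_mul_right (setLIntegral_le_lintegral _ _) _)
    rcases le_or_gt (s y) 1 with h1 | h1
    · exact h1.trans (le_max_left _ _)
    · exact (le_self_pow₀ h1.le hn.ne').trans (hpow.trans (le_max_right _ _))
  calc volume E ≤ volume (⋃ y, zCube (c y) (s y)) :=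
        measure_mono fun y hyE => mem_iUnion.mpr ⟨⟨y, hyE⟩, hy ⟨y, hyE⟩⟩
    _ ≤ ENNReal.ofReal ((4 * √n) ^ n) * ((ENNReal.ofReal t)⁻¹ • volume.withDensity g) univ :=
        volume_iUnion_zCube_le hn c s hs hbdd _ fun y => by
          rw [Measure.smul_apply, withDensity_apply _ (measurableSet_zCube _ _), smul_eq_mul]
          exact hvol y
    _ = _ := by
        rw [Measure.smul_apply, withDensity_apply _ MeasurableSet.univ, smul_eq_mul,
          Measure.restrict_univ, mul_assoc]

theorem cubeAvg_le_cubeAvg_indicator_add (g : Rn n → ℝ≥0∞) (a : ℝ≥0∞) (c : Rn n) {s : ℝ}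
    (hs : 0 < s) : cubeAvg g c s ≤ cubeAvg ({y | a < g y}.indicator g) c s + a := by
  have hV₀ : ENNReal.ofReal (s ^ n) ≠ 0 := (ENNReal.ofReal_pos.mpr (by positivity)).ne'
  have hsplit (y : Rn n) : g y ≤ {y | a < g y}.indicator g y + a := by
    by_cases hy : a < g y
    · simp [hy]
    · simpa [hy] using not_lt.mp hy
  calc cubeAvg g c s
      ≤ (ENNReal.ofReal (s ^ n))⁻¹ * ∫⁻ y in zCube c s, ({y | a < g y}.indicator g y + a) :=
        mul_le_mul_right (lintegral_mono hsplit) _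
    _ = cubeAvg ({y | a < g y}.indicator g) c s + a := by
        rw [lintegral_add_right _ measurable_const, setLIntegral_const, volume_zCube c hs.le,
          mul_add, cubeAvg, mul_comm a, ← mul_assoc,
          ENNReal.inv_mul_cancel hV₀ ENNReal.ofReal_ne_top, one_mul]

theorem maxE_le_maxE_indicator_add (g : Rn n → ℝ≥0∞) (a : ℝ≥0∞) (x : Rn n) :
    maxE g x ≤ maxE ({y | a < g y}.indicator g) x + a :=
  maxE_le fun c _ hs hx => (cubeAvg_le_cubeAvg_indicator_add g a c hs).trans
    (add_le_add_left (cubeAvg_le_maxE hs hx) a)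

-- The part of `g` below `t / 2` cannot push an average above `t`.
theorem volume_lt_maxE_le_lintegral_large (hn : 0 < n) (g : Rn n → ℝ≥0∞) {t : ℝ}
    (ht : 0 < t) :
    volume {y | ENNReal.ofReal t < maxE g y} ≤ ENNReal.ofReal ((4 * √n) ^ n) *
      ∫⁻ y, if ENNReal.ofReal (t / 2) < g y then ENNReal.ofReal (2 / t) * g y else 0 := by
  set g' := {y | ENNReal.ofReal (t / 2) < g y}.indicator g
  have hsub :
      {y | ENNReal.ofReal t < maxE g y} ⊆ {y | ENNReal.ofReal (t / 2) < maxE g' y} := by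
    intro y hy
    by_contra hle
    have := (maxE_le_maxE_indicator_add g (ENNReal.ofReal (t / 2)) y).trans
      (add_le_add_left (not_lt.mp hle) _)
    rw [← ENNReal.ofReal_add (by positivity) (by positivity), add_halves] at this
    exact (not_lt.mpr this) hy
  calc volume {y | ENNReal.ofReal t < maxE g y}
      ≤ ENNReal.ofReal ((4 * √n) ^ n) * (ENNReal.ofReal (t / 2))⁻¹ * ∫⁻ y, g' y :=
        (measure_mono hsub).trans (volume_lt_maxE_le hn g' (by positivity))
    _ = _ := by
        rw [mul_assoc, ← lintegral_const_mul' _ _ (by simpa using ht),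
          ← ENNReal.ofReal_inv_of_pos (by positivity), inv_div]
        congr 2 with y
        by_cases hy : ENNReal.ofReal (t / 2) < g y <;> simp [g', hy]

theorem lintegral_eq_lintegral_meas_ofReal_lt {α : Type*} [MeasurableSpace α] (μ : Measure α)
    [SFinite μ] {f : α → ℝ≥0∞} (hf : Measurable f) :
    ∫⁻ y, f y ∂μ = ∫⁻ t in Ioi (0 : ℝ), μ {y | ENNReal.ofReal t < f y} := by
  set S : Set (α × ℝ) := {p | ENNReal.ofReal p.2 < f p.1}
  have hS : MeasurableSet S :=
    measurableSet_lt (ENNReal.measurable_ofReal.comp measurable_snd) (hf.comp measurable_fst)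
  have hlevel (a : ℝ≥0∞) : volume ({t : ℝ | ENNReal.ofReal t < a} ∩ Ioi 0) = a := by
    rcases eq_or_ne a ∞ with rfl | ha
    · simp [ENNReal.ofReal_lt_top, Real.volume_Ioi]
    · have : {t : ℝ | ENNReal.ofReal t < a} ∩ Ioi 0 = Ioo 0 a.toReal := by
        ext t
        simp only [mem_inter_iff, mem_ofPred_eq, mem_Ioi, mem_Ioo]
        exact ⟨fun ⟨h1, h2⟩ => ⟨h2, (ENNReal.ofReal_lt_iff_lt_toReal h2.le ha).mp h1⟩,
          fun ⟨h1, h2⟩ => ⟨(ENNReal.ofReal_lt_iff_lt_toReal h1.le ha).mpr h2, h1⟩⟩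
      rw [this, Real.volume_Ioo, sub_zero, ENNReal.ofReal_toReal ha]
  calc ∫⁻ y, f y ∂μ = ∫⁻ y, (∫⁻ t in Ioi (0 : ℝ), S.indicator 1 (y, t)) ∂μ := by
        congr 1 with y
        rw [← hlevel (f y), ← Measure.restrict_apply' measurableSet_Ioi,
          ← lintegral_indicator_one (measurableSet_lt ENNReal.measurable_ofReal measurable_const)]
        rfl
    _ = ∫⁻ t in Ioi (0 : ℝ), ∫⁻ y, S.indicator 1 (y, t) ∂μ :=
        lintegral_lintegral_swap (f := fun y t => S.indicator 1 (y, t))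
          (measurable_one.indicator hS).aemeasurable
    _ = _ := by
        congr 1 with t
        rw [← lintegral_indicator_one
          (s := {y | ENNReal.ofReal t < f y}) (hf measurableSet_Ioi)]
        rfl

theorem logPlus_nonneg (t : ℝ) : 0 ≤ logPlus t := le_max_right _ _

theorem log_le_logPlus (t : ℝ) : Real.log t ≤ logPlus t := le_max_left _ _

theorem lintegral_Ioc_two_div {a b : ℝ} (ha : 0 < a) (hab : a ≤ b) :
    ∫⁻ t in Ioc a b, ENNReal.ofReal (2 / t) = ENNReal.ofReal (2 * Real.log (b / a)) := by
  have hint : IntegrableOn (fun t : ℝ => 2 / t) (Ioc a b) :=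
    (continuousOn_const.div continuousOn_id fun t ht =>
      (ha.trans_le ht.1).ne').integrableOn_Icc.mono_set Ioc_subset_Icc_self
  rw [← ofReal_integral_eq_lintegral_ofReal hint (ae_restrict_of_forall_mem measurableSet_Ioc
    fun t ht => div_nonneg zero_le_two (ha.trans ht.1).le), ← intervalIntegral.integral_of_le hab]
  simp_rw [div_eq_mul_inv]
  rw [intervalIntegral.integral_const_mul, integral_inv_of_pos ha (ha.trans_le hab),
    div_eq_mul_inv]

-- Integrating the bound of `volume_lt_maxE_le_lintegral_large` over the levels `t > 2α` yields
-- `2 g log⁺(g / α)`: this is where `L log L` enters.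
theorem lintegral_Ioi_large_le_zygFnE {α : ℝ} (hα : 0 < α) (u : ℝ≥0∞) :
    ∫⁻ t in Ioi (2 * α), (if ENNReal.ofReal (t / 2) < u then ENNReal.ofReal (2 / t) * u else 0)
      ≤ ENNReal.ofReal (2 * α) * zygFnE (u / ENNReal.ofReal α) := by
  rcases eq_or_ne u ∞ with rfl | hu
  · have : zygFnE (∞ / ENNReal.ofReal α) = ∞ := by
      simp [zygFnE, ENNReal.top_div_of_ne_top]
    rw [this, ENNReal.mul_top (by simpa using hα)]
    exact le_top
  set v := u.toReal
  have hv : u = ENNReal.ofReal v := (ENNReal.ofReal_toReal hu).symm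
  rcases le_or_gt v α with hvα | hαv
  · calc _ = ∫⁻ _ in Ioi (2 * α), (0 : ℝ≥0∞) := by
          refine setLIntegral_congr_fun measurableSet_Ioi fun t ht => if_neg ?_
          rw [hv, not_lt]
          exact ENNReal.ofReal_le_ofReal (by linarith [mem_Ioi.mp ht])
      _ ≤ _ := by rw [lintegral_zero]; exact zero_le
  calc _ ≤ ∫⁻ t in Ioi (2 * α),
          (Iic (2 * v)).indicator (fun t => ENNReal.ofReal (2 / t) * u) t := by
        refine lintegral_mono fun t => ?_
        split_ifs with hlt
        · rw [hv, ENNReal.ofReal_lt_ofReal_iff'] at hlt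
          rw [indicator_of_mem (mem_Iic.mpr (by linarith [hlt.1]))]
        · exact zero_le
    _ = ENNReal.ofReal (2 * Real.log (v / α)) * u := by
        rw [lintegral_indicator measurableSet_Iic, Measure.restrict_restrict measurableSet_Iic,
          Iic_inter_Ioi, lintegral_mul_const' _ _ hu,
          lintegral_Ioc_two_div (by positivity) (by linarith), mul_div_mul_left _ _ two_ne_zero]
    _ ≤ ENNReal.ofReal (2 * α * (v / α * (1 + logPlus (v / α)))) := by
        rw [hv, ← ENNReal.ofReal_mul' (by positivity : 0 ≤ v)]
        refine ENNReal.ofReal_le_ofReal ?_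
        have hαv' : 2 * α * (v / α) = 2 * v := by field_simp
        nlinarith [hαv', log_le_logPlus (v / α), logPlus_nonneg (v / α)]
    _ = ENNReal.ofReal (2 * α) * zygFnE (u / ENNReal.ofReal α) := by
        rw [hv, zygFnE, ← ENNReal.ofReal_div_of_pos hα, ENNReal.toReal_ofReal (by positivity),
          ENNReal.ofReal_mul (p := 2 * α) (by positivity),
          ENNReal.ofReal_mul (p := v / α) (by positivity),
          ENNReal.ofReal_add zero_le_one (logPlus_nonneg _), ENNReal.ofReal_one]

theorem setLIntegral_ratMaxE_le (hn : 0 < n) {g : Rn n → ℝ≥0∞} (hg : Measurable g) {α : ℝ}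
    (hα : 0 < α) (Q : Set (Rn n)) :
    ∫⁻ y in Q, ratMaxE g y ≤ ENNReal.ofReal (2 * α) * volume Q +
      ENNReal.ofReal ((4 * √n) ^ n) *
        (ENNReal.ofReal (2 * α) * ∫⁻ y, zygFnE (g y / ENNReal.ofReal α)) := by
  set F : ℝ → Rn n → ℝ≥0∞ :=
    fun t y => if ENNReal.ofReal (t / 2) < g y then ENNReal.ofReal (2 / t) * g y else 0
  have hF : Measurable (Function.uncurry F) :=
    Measurable.ite (measurableSet_lt (measurable_fst.div_const 2).ennreal_ofReal
      (hg.comp measurable_snd))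
      ((measurable_const.div measurable_fst).ennreal_ofReal.mul (hg.comp measurable_snd))
      measurable_const
  rw [lintegral_eq_lintegral_meas_ofReal_lt _ (measurable_ratMaxE g),
    ← Ioc_union_Ioi_eq_Ioi (by positivity : (0 : ℝ) ≤ 2 * α),
    lintegral_union measurableSet_Ioi Ioc_disjoint_Ioi_same]
  refine add_le_add ?_ ?_
  · calc ∫⁻ t in Ioc 0 (2 * α), volume.restrict Q {y | ENNReal.ofReal t < ratMaxE g y}
        ≤ ∫⁻ _ in Ioc 0 (2 * α), volume Q := lintegral_mono fun t =>
          (measure_mono (subset_univ _)).trans_eq (Measure.restrict_apply_univ Q)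
      _ = ENNReal.ofReal (2 * α) * volume Q := by
          rw [setLIntegral_const, Real.volume_Ioc, sub_zero, mul_comm]
  · calc ∫⁻ t in Ioi (2 * α), volume.restrict Q {y | ENNReal.ofReal t < ratMaxE g y}
        ≤ ∫⁻ t in Ioi (2 * α), ENNReal.ofReal ((4 * √n) ^ n) * ∫⁻ y, F t y := by
          refine setLIntegral_mono' measurableSet_Ioi fun t ht => ?_
          refine (Measure.restrict_le_self _).trans <| (measure_mono fun y hy => ?_).trans <|
            volume_lt_maxE_le_lintegral_large hn g (by linarith [mem_Ioi.mp ht])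
          exact lt_of_lt_of_le hy (ratMaxE_le_maxE g y)
      _ = ENNReal.ofReal ((4 * √n) ^ n) * ∫⁻ y, ∫⁻ t in Ioi (2 * α), F t y := by
          rw [lintegral_const_mul' _ _ ENNReal.ofReal_ne_top,
            lintegral_lintegral_swap hF.aemeasurable]
      _ ≤ ENNReal.ofReal ((4 * √n) ^ n) *
            ∫⁻ y, ENNReal.ofReal (2 * α) * zygFnE (g y / ENNReal.ofReal α) :=
          mul_le_mul_right (lintegral_mono fun y => lintegral_Ioi_large_le_zygFnE hα (g y)) _
      _ = _ := by rw [lintegral_const_mul' _ _ ENNReal.ofReal_ne_top]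

theorem le_mul_zygAvgE {g : Rn n → ℝ≥0∞} {c : Rn n} {h : ℝ} {X D : ℝ≥0∞} (hD₀ : D ≠ 0)
    (hD : D ≠ ∞) (H : ∀ α : ℝ, 0 < α →
      (ENNReal.ofReal (h ^ n))⁻¹ * ∫⁻ y in zCube c h, zygFnE (g y / ENNReal.ofReal α) ≤ 1 →
        X ≤ D * ENNReal.ofReal α) :
    X ≤ D * zygAvgE g c h := by
  rw [mul_comm, ← ENNReal.div_le_iff hD₀ hD]
  refine le_sInf ?_
  rintro _ ⟨α, hα, rfl, hΦ⟩
  rw [ENNReal.div_le_iff hD₀ hD, mul_comm]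
  exact H α hα hΦ

theorem setLIntegral_ratMaxE_indicator_le (hn : 0 < n) {G : Rn n → ℝ≥0∞} (hG : Measurable G)
    {Q : Set (Rn n)} (hQ : volume Q ≠ ∞) (c : Rn n) {h : ℝ} (hh : 0 < h) :
    ∫⁻ y in Q, ratMaxE ((zCube c h).indicator G) y ≤
      (ENNReal.ofReal 2 * volume Q + ENNReal.ofReal (2 * (4 * √n) ^ n) * volume (zCube c h)) *
        zygAvgE G c h := by
  have hV₀ : ENNReal.ofReal (h ^ n) ≠ 0 := (ENNReal.ofReal_pos.mpr (by positivity)).ne'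
  rw [volume_zCube c hh.le]
  refine le_mul_zygAvgE (fun h0 => mul_ne_zero (ENNReal.ofReal_pos.mpr (by positivity)).ne' hV₀
    (add_eq_zero.mp h0).2) (by finiteness) fun α hα hΦ => ?_
  have hΦ' : ∫⁻ y, zygFnE ((zCube c h).indicator G y / ENNReal.ofReal α) ≤
      ENNReal.ofReal (h ^ n) := by
    have hind : (fun y => zygFnE ((zCube c h).indicator G y / ENNReal.ofReal α)) =
        (zCube c h).indicator fun y => zygFnE (G y / ENNReal.ofReal α) := by
      funext y
      by_cases hy : y ∈ zCube c h <;> simp [hy, zygFnE]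
    rw [hind, lintegral_indicator (measurableSet_zCube c h),
      ← mul_one (ENNReal.ofReal (h ^ n)), ← ENNReal.inv_mul_le_iff hV₀ ENNReal.ofReal_ne_top]
    exact hΦ
  calc ∫⁻ y in Q, ratMaxE ((zCube c h).indicator G) y
      ≤ ENNReal.ofReal (2 * α) * volume Q + ENNReal.ofReal ((4 * √n) ^ n) *
          (ENNReal.ofReal (2 * α) * ENNReal.ofReal (h ^ n)) :=
        (setLIntegral_ratMaxE_le hn (hG.indicator (measurableSet_zCube c h)) hα Q).trans
          (add_le_add_right (mul_le_mul_right (mul_le_mul_right hΦ' _) _) _)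
    _ = _ := by
        rw [ENNReal.ofReal_mul (p := 2) zero_le_two, ENNReal.ofReal_mul (p := 2) zero_le_two]
        ring

theorem maxE_le_ratMaxE_indicator_add (G : Rn n → ℝ≥0∞) {ctr y : Rn n} {h : ℝ} (hh : 0 ≤ h)
    (hy : y ∈ zCube ctr h) :
    maxE G y ≤ ENNReal.ofReal (2 ^ n) * ratMaxE ((zCube ctr (3 * h)).indicator G) y +
      ENNReal.ofReal (3 ^ n) * ⨆ (q : ℝ) (_ : h ≤ q), cubeAvg G ctr q := by
  refine maxE_le fun c s hs hys => ?_
  have hsub := zCube_subset_of_mem hys hy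
  rcases le_or_gt s h with hsh | hhs
  · have hsub3 : zCube c s ⊆ zCube ctr (3 * h) := hsub.trans (zCube_mono _ (by linarith))
    have hG : cubeAvg G c s = cubeAvg ((zCube ctr (3 * h)).indicator G) c s := by
      rw [cubeAvg, cubeAvg, setLIntegral_congr_fun (measurableSet_zCube c s)
        fun z hz => (indicator_of_mem (hsub3 hz) G).symm]
    calc cubeAvg G c s ≤ maxE ((zCube ctr (3 * h)).indicator G) y :=
          hG ▸ cubeAvg_le_maxE hs hys
      _ ≤ _ := (maxE_le_ratMaxE _ y).trans le_self_add
  · calc cubeAvg G c s ≤ ENNReal.ofReal (3 ^ n) * cubeAvg G ctr (2 * s + h) :=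
          cubeAvg_le_pow_mul_cubeAvg G hs (by positivity) (by linarith) hsub
      _ ≤ ENNReal.ofReal (3 ^ n) * ⨆ (q : ℝ) (_ : h ≤ q), cubeAvg G ctr q :=
          mul_le_mul_right (le_iSup₂_of_le (f := fun q (_ : h ≤ q) => cubeAvg G ctr q)
            (2 * s + h) (by linarith) le_rfl) _
      _ ≤ _ := le_add_self

theorem setLIntegral_maxE_le_add (G : Rn n → ℝ≥0∞) {ctr : Rn n} {h : ℝ} (hh : 0 ≤ h) :
    ∫⁻ y in zCube ctr h, maxE G y ≤
      ENNReal.ofReal (2 ^ n) * (∫⁻ y in zCube ctr h, ratMaxE ((zCube ctr (3 * h)).indicator G) y) +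
        ENNReal.ofReal (3 ^ n) * (⨆ (q : ℝ) (_ : h ≤ q), cubeAvg G ctr q) *
          volume (zCube ctr h) := by
  calc ∫⁻ y in zCube ctr h, maxE G y
      ≤ ∫⁻ y in zCube ctr h, (ENNReal.ofReal (2 ^ n) *
          ratMaxE ((zCube ctr (3 * h)).indicator G) y +
            ENNReal.ofReal (3 ^ n) * ⨆ (q : ℝ) (_ : h ≤ q), cubeAvg G ctr q) :=
        setLIntegral_mono' (measurableSet_zCube ctr h) fun y hy =>
          maxE_le_ratMaxE_indicator_add G hh hy
    _ = _ := by
        rw [lintegral_add_right _ measurable_const, lintegral_const_mul _ (measurable_ratMaxE _),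
          setLIntegral_const]

end

theorem average_maxE_le_iSup_zygAvgE {n : ℕ} (hn : 0 < n) {G : Rn n → ℝ≥0∞}
    (hG : Measurable G) (ctr : Rn n) {h : ℝ} (hh : 0 < h) :
    (ENNReal.ofReal (h ^ n))⁻¹ * ∫⁻ y in zCube ctr h, maxE G y ≤
      ENNReal.ofReal (2 ^ n * (2 + 2 * (4 * √n) ^ n * 3 ^ n) + 3 ^ n) *
        ⨆ (ctr' : Rn n) (h' : ℝ) (_ : 0 < h') (_ : zCube ctr h ⊆ zCube ctr' h'),
          zygAvgE G ctr' h' := by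
  set S := ⨆ (ctr' : Rn n) (h' : ℝ) (_ : 0 < h') (_ : zCube ctr h ⊆ zCube ctr' h'),
    zygAvgE G ctr' h'
  have hS {q : ℝ} (hq : h ≤ q) : zygAvgE G ctr q ≤ S :=
    le_iSup₂_of_le (f := fun ctr' h' => ⨆ (_ : 0 < h') (_ : zCube ctr h ⊆ zCube ctr' h'),
      zygAvgE G ctr' h') ctr q <| le_iSup₂_of_le (hh.trans_le hq) (zCube_mono ctr hq) le_rfl
  have hfar : ⨆ (q : ℝ) (_ : h ≤ q), cubeAvg G ctr q ≤ S :=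
    iSup₂_le fun q hq => (cubeAvg_le_zygAvgE G ctr q).trans (hS hq)
  have hnear := setLIntegral_ratMaxE_indicator_le hn hG (Q := zCube ctr h)
    (by rw [volume_zCube ctr hh.le]; exact ENNReal.ofReal_ne_top) ctr (by positivity : 0 < 3 * h)
  have hc : ENNReal.ofReal (2 ^ n * (2 + 2 * (4 * √n) ^ n * 3 ^ n) + 3 ^ n) =
      ENNReal.ofReal (2 ^ n) * (ENNReal.ofReal 2 +
        ENNReal.ofReal (2 * (4 * √n) ^ n) * ENNReal.ofReal (3 ^ n)) + ENNReal.ofReal (3 ^ n) := by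
    rw [ENNReal.ofReal_add (by positivity) (by positivity), ENNReal.ofReal_mul (by positivity),
      ENNReal.ofReal_add (by positivity) (by positivity), ENNReal.ofReal_mul (by positivity)]
  rw [ENNReal.inv_mul_le_iff (ENNReal.ofReal_pos.mpr (by positivity)).ne' ENNReal.ofReal_ne_top,
    ← volume_zCube ctr hh.le]
  calc ∫⁻ y in zCube ctr h, maxE G y
      ≤ ENNReal.ofReal (2 ^ n) *
          (∫⁻ y in zCube ctr h, ratMaxE ((zCube ctr (3 * h)).indicator G) y) +
        ENNReal.ofReal (3 ^ n) * (⨆ (q : ℝ) (_ : h ≤ q), cubeAvg G ctr q) *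
          volume (zCube ctr h) := setLIntegral_maxE_le_add G hh.le
    _ ≤ ENNReal.ofReal (2 ^ n) * ((ENNReal.ofReal 2 * volume (zCube ctr h) +
          ENNReal.ofReal (2 * (4 * √n) ^ n) * (ENNReal.ofReal (3 ^ n) * volume (zCube ctr h))) *
            S) + ENNReal.ofReal (3 ^ n) * S * volume (zCube ctr h) := by
        rw [← volume_zCube_mul ctr (by norm_num) hh.le]
        exact add_le_add (mul_le_mul_right (hnear.trans (mul_le_mul_right (hS (by linarith)) _)) _)
          (mul_le_mul_left (mul_le_mul_right hfar _) _)
    _ = _ := by rw [hc]; ring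

/-- There is `c > 0` such that for every locally integrable `f` and every
cube `Q`, `|Q|⁻¹ ∫_Q Mf ≤ c sup_{Q' ⊇ Q} ‖f‖_{L(1+log⁺L),Q'}`. -/
theorem stmt6 (n : ℕ) (hn : 0 < n) :
    ∃ c : ℝ, 0 < c ∧ ∀ f : Rn n → ℝ, MeasureTheory.LocallyIntegrable f volume →
      ∀ (ctr : Rn n) (h : ℝ), 0 < h →
      (ENNReal.ofReal (h ^ n))⁻¹ * ∫⁻ y in zCube ctr h, HLM f y ≤
        ENNReal.ofReal c *
          ⨆ (ctr' : Rn n) (h' : ℝ) (_ : 0 < h') (_ : zCube ctr h ⊆ zCube ctr' h'),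
            zygAvg f ctr' h' := by
  refine ⟨2 ^ n * (2 + 2 * (4 * √n) ^ n * 3 ^ n) + 3 ^ n, by positivity,
    fun f hf ctr h hh => ?_⟩
  have hfm : AEMeasurable (fun y => ENNReal.ofReal |f y|) :=
    hf.aestronglyMeasurable.aemeasurable.abs.ennreal_ofReal
  have hHLM : HLM f = maxE (hfm.mk _) := maxE_congr_ae hfm.ae_eq_mk
  simp only [hHLM, zygAvg, zygAvgE_congr_ae hfm.ae_eq_mk]
  exact average_maxE_le_iSup_zygAvgE hn hfm.measurable_mk ctr hh

end
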